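/- Let C be a unitary 2^n × 2^n complex matrix, let S ⊆ T ⊆ {1,…,n} be sets of qubits, and for each i ∈ T let T̄_{(i)} ∈ {T_{(i)}, T_{(i)}†} be a T or T† gate on qubit i. Suppose C Z_{(j)} C† = Z_{(j)} for every j ∈ S. Then C (∏_{i∈T} T̄_{(i)}) C† = (∏_{j∈S} T̄_{(j)}) · C (∏_{i∈T∖S} T̄_{(i)}) C†. That is, the T/T† gates on trivially conjugated qubits can be pulled out of the conjugation unchanged. -/

import Mathlib

open Matrix Complex

noncomputable section

/-- The single-qubit T gate `diag(1, e^{iπ/4})`. -/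
def Tgate : Matrix (Fin 2) (Fin 2) ℂ :=
  !![1, 0; 0, Complex.exp (Real.pi * Complex.I / 4)]

/-- The single-qubit Pauli Z gate `diag(1, -1)`. -/
def Zgate : Matrix (Fin 2) (Fin 2) ℂ := !![1, 0; 0, -1]

/-- The n-qubit gate (a `2^n × 2^n` matrix, indexed by `Fin n → Fin 2`)
applying the single-qubit gate `A` on qubit `q` and the identity elsewhere. -/
def gateOn (n : ℕ) (q : Fin n) (A : Matrix (Fin 2) (Fin 2) ℂ) :
    Matrix (Fin n → Fin 2) (Fin n → Fin 2) ℂ :=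
  fun x y => A (x q) (y q) * ∏ i ∈ Finset.univ.erase q, (if x i = y i then (1 : ℂ) else 0)

/-- `R(P) = (1/2)(1 + e^{iπ/4})·I + (1/2)(1 − e^{iπ/4})·P`. -/
def Rop {m : Type*} [Fintype m] [DecidableEq m] (P : Matrix m m ℂ) : Matrix m m ℂ :=
  ((1 + Complex.exp (Real.pi * Complex.I / 4)) / 2) • (1 : Matrix m m ℂ)
    + ((1 - Complex.exp (Real.pi * Complex.I / 4)) / 2) • P

/-- `R†(P) = (1/2)(1 + e^{−iπ/4})·I + (1/2)(1 − e^{−iπ/4})·P`. -/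
def RopDag {m : Type*} [Fintype m] [DecidableEq m] (P : Matrix m m ℂ) : Matrix m m ℂ :=
  ((1 + Complex.exp (-(Real.pi * Complex.I / 4))) / 2) • (1 : Matrix m m ℂ)
    + ((1 - Complex.exp (-(Real.pi * Complex.I / 4))) / 2) • P

/-- The four single-qubit Pauli basis matrices `I, X, Y, Z`. -/
def pauli1 : Fin 4 → Matrix (Fin 2) (Fin 2) ℂ :=
  ![1, !![0, 1; 1, 0], !![0, -Complex.I; Complex.I, 0], !![1, 0; 0, -1]]

/-- The `n`-fold Kronecker product `Q_1 ⊗ ⋯ ⊗ Q_n` with each `Q_i ∈ {I, X, Y, Z}`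
selected by `f : Fin n → Fin 4`. -/
def pauliN (n : ℕ) (f : Fin n → Fin 4) : Matrix (Fin n → Fin 2) (Fin n → Fin 2) ℂ :=
  fun x y => ∏ i, pauli1 (f i) (x i) (y i)

/-- The channel representation of a `2^n × 2^n` matrix `U`: the `4^n × 4^n` matrix
with `(P, Q)` entry `2^{-n}·Tr(P U Q U†)`, indexed by the Pauli basis. -/
def chan (n : ℕ) (U : Matrix (Fin n → Fin 2) (Fin n → Fin 2) ℂ) :
    Matrix (Fin n → Fin 4) (Fin n → Fin 4) ℂ :=
  fun P Q => ((1 : ℂ) / 2 ^ n) * (pauliN n P * U * pauliN n Q * Uᴴ).trace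

/-! Since `C` is unitary, `C Z_(j) C† = Z_(j)` says that `C` commutes with `Z_(j)`, hence with every
gate on qubit `j` lying in the span of `1` and `Z_(j)`: these are the gates `gateOn n j D` with `D`
diagonal, among them `T_(j)` and `T_(j)†`. Splitting the product over `T` into the product over `S`
times the product over `T \ S`, the first factor commutes past `C`. -/

theorem commute_of_mem_unitary_of_mul_mul_star_eq {R : Type*} [Monoid R] [StarMul R] {U P : R}
    (hU : U ∈ unitary R) (h : U * P * star U = P) : Commute U P :=
  calc U * P = U * P * (star U * U) := by rw [Unitary.star_mul_self_of_mem hU, mul_one]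
    _ = P * U := by rw [← mul_assoc, h]

theorem Finset.noncommProd_eq_mul_noncommProd_sdiff {α β : Type*} [DecidableEq α] [Monoid β]
    {s t : Finset α} (hst : s ⊆ t) (f : α → β)
    (comm : (t : Set α).Pairwise (Function.onFun Commute f)) :
    t.noncommProd f comm =
      s.noncommProd f (comm.mono (coe_subset.2 hst)) *
        (t \ s).noncommProd f (comm.mono (coe_subset.2 sdiff_subset)) := by
  rw [noncommProd_congr (union_sdiff_of_subset hst).symm (fun _ _ => rfl)]
  exact noncommProd_union_of_disjoint disjoint_sdiff f _

section gateOn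

variable {n : ℕ} (q : Fin n)

theorem gateOn_one : gateOn n q 1 = 1 := by
  funext x y
  rw [gateOn, Matrix.one_apply, Matrix.one_apply,
    Finset.mul_prod_erase _ (fun i => if x i = y i then (1 : ℂ) else 0) (Finset.mem_univ q),
    Finset.prod_boole]
  simp only [Finset.mem_univ, forall_const, funext_iff]

theorem gateOn_add (A B : Matrix (Fin 2) (Fin 2) ℂ) :
    gateOn n q (A + B) = gateOn n q A + gateOn n q B := by
  ext x y
  simp only [gateOn, Matrix.add_apply, add_mul]

theorem gateOn_smul (a : ℂ) (A : Matrix (Fin 2) (Fin 2) ℂ) :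
    gateOn n q (a • A) = a • gateOn n q A := by
  ext x y
  simp only [gateOn, Matrix.smul_apply, smul_eq_mul, mul_assoc]

theorem gateOn_conjTranspose (A : Matrix (Fin 2) (Fin 2) ℂ) :
    (gateOn n q A)ᴴ = gateOn n q Aᴴ := by
  ext x y
  simp only [gateOn, conjTranspose_apply, star_mul', star_prod, eq_comm (a := y _)]
  congr 1
  exact Finset.prod_congr rfl fun i _ => by split_ifs <;> simp

end gateOn

theorem diagonal_eq_smul_one_add_smul_Zgate (d : Fin 2 → ℂ) :
    diagonal d =
      ((d 0 + d 1) / 2) • (1 : Matrix (Fin 2) (Fin 2) ℂ) + ((d 0 - d 1) / 2) • Zgate := by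
  ext i j
  fin_cases i <;> fin_cases j <;> simp [Zgate] <;> ring

theorem Tgate_eq_diagonal : Tgate = diagonal ![1, Complex.exp (Real.pi * Complex.I / 4)] := by
  ext i j
  fin_cases i <;> fin_cases j <;> simp [Tgate]

theorem Commute.gateOn_diagonal {n : ℕ} {C : Matrix (Fin n → Fin 2) (Fin n → Fin 2) ℂ}
    {q : Fin n} (hC : Commute C (gateOn n q Zgate)) (d : Fin 2 → ℂ) :
    Commute C (gateOn n q (diagonal d)) := by
  rw [diagonal_eq_smul_one_add_smul_Zgate, gateOn_add, gateOn_smul, gateOn_smul, gateOn_one]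
  exact ((Commute.one_right C).smul_right _).add_right (hC.smul_right _)

/-- T/T† gates on trivially conjugated qubits can be pulled out of the
conjugation unchanged:
`C (∏_{i∈T} T̄_{(i)}) C† = (∏_{j∈S} T̄_{(j)}) · C (∏_{i∈T∖S} T̄_{(i)}) C†`. -/
theorem pull_out_trivially_conjugated (n : ℕ)
    (C : Matrix (Fin n → Fin 2) (Fin n → Fin 2) ℂ)
    (hC : C ∈ Matrix.unitaryGroup (Fin n → Fin 2) ℂ)
    (S T : Finset (Fin n)) (hST : S ⊆ T)
    (Tb : Fin n → Matrix (Fin n → Fin 2) (Fin n → Fin 2) ℂ)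
    (hTb : ∀ i, Tb i = gateOn n i Tgate ∨ Tb i = (gateOn n i Tgate)ᴴ)
    (hcomm : ∀ i j, i ≠ j → Commute (Tb i) (Tb j))
    (htriv : ∀ j ∈ S, C * gateOn n j Zgate * Cᴴ = gateOn n j Zgate) :
    C * T.noncommProd Tb (fun i _ j _ h => hcomm i j h) * Cᴴ =
      S.noncommProd Tb (fun i _ j _ h => hcomm i j h) *
        (C * (T \ S).noncommProd Tb (fun i _ j _ h => hcomm i j h) * Cᴴ) := by
  have hC_Tb : ∀ j ∈ S, Commute C (Tb j) := by
    intro j hj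
    have hC_Z := commute_of_mem_unitary_of_mul_mul_star_eq hC (htriv j hj)
    rcases hTb j with hT | hT <;> rw [hT]
    · rw [Tgate_eq_diagonal]
      exact hC_Z.gateOn_diagonal _
    · rw [gateOn_conjTranspose, Tgate_eq_diagonal, diagonal_conjTranspose]
      exact hC_Z.gateOn_diagonal _
  have hC_prod : Commute C (S.noncommProd Tb (fun i _ j _ h => hcomm i j h)) :=
    Finset.noncommProd_commute _ _ _ _ hC_Tb
  rw [Finset.noncommProd_eq_mul_noncommProd_sdiff hST Tb (fun i _ j _ h => hcomm i j h),
    ← mul_assoc, hC_prod.eq]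
  simp only [mul_assoc]
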